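/- arXiv:2502.10152 — 3 statements merged into one kernel-verified Lean document; each statement's English description precedes it below -/
import Mathlib

section
/- The bipyramid configuration 1:3:1 for $n=5$, consisting of the north and south poles together with three equidistributed points on the equator (Gram matrix with blocks: $X_{12} = -1$, $X_{ij} = -1/2$ for $3 \le i < j \le 5$, and $X_{ij} = 0$ between the two groups), satisfies the polynomial system for critical configurations of the logarithmic Fekete problem with $5$ points. -/
open Finset Matrix

/-- The polynomial system for critical configurations of the logarithmic Fekete
problem with `n` points, in the Gram matrix variables `X i j`. -/
def FeketeSystem (n : ℕ) (X : Matrix (Fin n) (Fin n) ℝ) : Prop :=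
  X.IsSymm ∧ (∀ i, X i i = 1) ∧ (∀ i j, i ≠ j → X i j ≠ 1) ∧
  (∀ j, 1 + ∑ k ∈ Finset.univ.erase j, X j k = 0) ∧
  (∀ i k, k ≠ i →
    ∑ j ∈ Finset.univ.erase k, (X i k - X i j) / (1 - X k j) = ((n : ℝ) - 1) * X i k)

/-- With unit diagonal, both sums of the system may be taken over all indices: the omitted
term of the first is `X j j = 1`, and that of the second has numerator `X i k - X i k = 0`. -/
theorem feketeSystem_of_sum_univ {n : ℕ} {X : Matrix (Fin n) (Fin n) ℝ} (hX : X.IsSymm)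
    (hdiag : ∀ i, X i i = 1) (hoff : ∀ i j, i ≠ j → X i j ≠ 1) (hrow : ∀ j, ∑ k, X j k = 0)
    (hcrit : ∀ i k, k ≠ i →
      ∑ j, (X i k - X i j) / (1 - X k j) = ((n : ℝ) - 1) * X i k) :
    FeketeSystem n X := by
  refine ⟨hX, hdiag, hoff, fun j => ?_, fun i k hki => ?_⟩
  · rw [← hrow j, ← add_sum_erase _ _ (mem_univ j), hdiag]
  · rw [sum_erase _ (by simp)]
    exact hcrit i k hki

theorem bipyramid_is_critical :
    FeketeSystem 5 !![1, -1, 0, 0, 0;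
                      -1, 1, 0, 0, 0;
                      0, 0, 1, -1/2, -1/2;
                      0, 0, -1/2, 1, -1/2;
                      0, 0, -1/2, -1/2, 1] := by
  refine feketeSystem_of_sum_univ ?_ (fun i => ?_) (fun i j hij => ?_) (fun j => ?_)
    (fun i k hki => ?_)
  · ext i j
    fin_cases i <;> fin_cases j <;> rfl
  · fin_cases i <;> rfl
  · fin_cases i <;> fin_cases j <;> simp at hij ⊢ <;> norm_num
  · fin_cases j <;> simp [Fin.sum_univ_five] <;> norm_num
  · fin_cases i <;> fin_cases k <;> simp [Fin.sum_univ_five] at hki ⊢ <;> norm_num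
end

section
/- For $n$ equidistributed points on the unit circle in the plane (the $n$-gon), i.e., $w_k = (\cos(2\pi k/n), \sin(2\pi k/n))$ for $k = 0,\dots,n-1$, the critical configuration equations $\frac{n-1}{2} w_k = \sum_{j\neq k} \frac{w_k - w_j}{\|w_k - w_j\|^2}$ hold for all $k$. -/
/-!
Identify the plane with `ℂ`, so that `w k = ζ ^ k` for `ζ = exp (2πi/n)`. For unit vectors
`a ≠ b`, `(a - b) / ‖a - b‖² = 1 / conj (a - b) = a · x / (x - 1)` with `x = b / a`, and
`x / (x - 1) + x⁻¹ / (x⁻¹ - 1) = 1`. The reflection `j ↦ 2k - j` replaces `x = ζ ^ (j - k)` by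
`x⁻¹`, so averaging the sum with its reflection gives `(n - 1) / 2 · ζ ^ k`.
-/

open Finset Real

theorem div_sub_one_add_inv_div_inv_sub_one {K : Type*} [Field K] {x : K} (hx₀ : x ≠ 0)
    (hx₁ : x ≠ 1) : x / (x - 1) + x⁻¹ / (x⁻¹ - 1) = 1 := by
  have : x - 1 ≠ 0 := sub_ne_zero.mpr hx₁
  have : 1 - x ≠ 0 := sub_ne_zero.mpr hx₁.symm
  field_simp
  ring

theorem pow_fin_val_add {M : Type*} [Monoid M] {n : ℕ} {ζ : M} (hζ : ζ ^ n = 1) (a b : Fin n) :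
    ζ ^ (a + b).val = ζ ^ a.val * ζ ^ b.val := by
  rw [Fin.val_add, ← pow_eq_pow_mod _ hζ, pow_add]

theorem RCLike.inv_norm_sq_smul_sub {𝕜 : Type*} [RCLike 𝕜] {a b : 𝕜} (ha : ‖a‖ = 1)
    (hb : ‖b‖ = 1) : (‖a - b‖ ^ 2)⁻¹ • (a - b) = a * (b / a / (b / a - 1)) := by
  have ha₀ : a ≠ 0 := by rintro rfl; simp at ha
  rcases eq_or_ne a b with rfl | hab
  · simp [div_self ha₀]
  have hb₀ : b ≠ 0 := by rintro rfl; simp at hb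
  have hba : b - a ≠ 0 := sub_ne_zero.mpr hab.symm
  rw [RCLike.real_smul_eq_coe_mul, RCLike.ofReal_inv, RCLike.ofReal_pow, ← RCLike.mul_conj,
    map_sub, ← RCLike.inv_eq_conj ha, ← RCLike.inv_eq_conj hb]
  field_simp

namespace IsPrimitiveRoot

variable {K : Type*} [Field K] {n : ℕ} {ζ : K}

theorem pow_fin_val_sub [NeZero n] (hζ : IsPrimitiveRoot ζ n) (a b : Fin n) :
    ζ ^ (a - b).val = ζ ^ a.val / ζ ^ b.val := by
  rw [eq_div_iff (pow_ne_zero _ (hζ.ne_zero (NeZero.ne n))), mul_comm,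
    ← pow_fin_val_add hζ.pow_eq_one, add_sub_cancel]

theorem two_mul_sum_div_sub_one (hζ : IsPrimitiveRoot ζ n) (k : Fin n) :
    2 * ∑ j ∈ univ.erase k, ζ ^ j.val / ζ ^ k.val / (ζ ^ j.val / ζ ^ k.val - 1) = n - 1 := by
  have : NeZero n := ⟨k.pos.ne'⟩
  have hζk : ζ ^ k.val ≠ 0 := pow_ne_zero _ (hζ.ne_zero (NeZero.ne n))
  set r : Fin n → K := fun j ↦ ζ ^ j.val / ζ ^ k.val
  have hr₀ (j : Fin n) : r j ≠ 0 := div_ne_zero (pow_ne_zero _ (hζ.ne_zero (NeZero.ne n))) hζk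
  have hr₁ (j : Fin n) (hj : j ≠ k) : r j ≠ 1 :=
    fun h ↦ hj (Fin.ext (hζ.pow_inj j.2 k.2 ((div_eq_one_iff_eq hζk).mp h)))
  have hreflect (j : Fin n) : r (k + (k - j)) = (r j)⁻¹ := by
    simp only [r, pow_fin_val_add hζ.pow_eq_one, hζ.pow_fin_val_sub, inv_div]
    field_simp
  have hsum : ∑ j ∈ univ.erase k, r j / (r j - 1) =
      ∑ j ∈ univ.erase k, (r j)⁻¹ / ((r j)⁻¹ - 1) := by
    refine sum_nbij' (fun j ↦ k + (k - j)) (fun j ↦ k + (k - j)) ?_ ?_ ?_ ?_ ?_ <;>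
      simp [hreflect, sub_eq_zero, eq_comm]
  calc 2 * ∑ j ∈ univ.erase k, r j / (r j - 1)
      = ∑ j ∈ univ.erase k, (r j / (r j - 1) + (r j)⁻¹ / ((r j)⁻¹ - 1)) := by
        rw [sum_add_distrib, ← hsum, two_mul]
    _ = ∑ j ∈ univ.erase k, 1 := sum_congr rfl fun j hj ↦
        div_sub_one_add_inv_div_inv_sub_one (hr₀ j) (hr₁ j (ne_of_mem_erase hj))
    _ = n - 1 := by simp [card_erase_of_mem, Nat.cast_sub k.pos]

theorem sum_inv_norm_sq_smul_sub {ζ : ℂ} (hζ : IsPrimitiveRoot ζ n) (k : Fin n) :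
    ∑ j ∈ univ.erase k, (‖ζ ^ k.val - ζ ^ j.val‖ ^ 2)⁻¹ • (ζ ^ k.val - ζ ^ j.val) =
      (((n : ℝ) - 1) / 2) • ζ ^ k.val := by
  have hnorm (j : Fin n) : ‖ζ ^ j.val‖ = 1 := by
    rw [norm_pow, hζ.norm'_eq_one k.pos.ne', one_pow]
  simp only [RCLike.inv_norm_sq_smul_sub (hnorm k) (hnorm _), ← mul_sum]
  rw [eq_div_of_mul_eq two_ne_zero ((mul_comm _ _).trans (hζ.two_mul_sum_div_sub_one k)),
    Complex.real_smul]
  push_cast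
  ring

end IsPrimitiveRoot

theorem Complex.orthonormalBasisOneI_repr_exp_mul_I (θ : ℝ) :
    Complex.orthonormalBasisOneI.repr (Complex.exp (θ * Complex.I)) =
      (WithLp.equiv 2 (Fin 2 → ℝ)).symm ![Real.cos θ, Real.sin θ] := by
  ext i
  fin_cases i <;> simp [Complex.exp_ofReal_mul_I_re, Complex.exp_ofReal_mul_I_im]

theorem ngon_is_critical_general (n : ℕ)
    (w : Fin n → EuclideanSpace ℝ (Fin 2))
    (hw : ∀ k : Fin n, w k = (WithLp.equiv 2 (Fin 2 → ℝ)).symm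
      ![Real.cos (2 * π * k / n), Real.sin (2 * π * k / n)]) :
    ∀ k, (((n : ℝ) - 1) / 2) • w k =
      ∑ j ∈ Finset.univ.erase k, (‖w k - w j‖ ^ 2)⁻¹ • (w k - w j) := by
  intro k
  set ζ := Complex.exp (2 * π * Complex.I / n)
  have hζ : IsPrimitiveRoot ζ n := Complex.isPrimitiveRoot_exp n k.pos.ne'
  have hw' (j : Fin n) : w j = Complex.orthonormalBasisOneI.repr (ζ ^ j.val) := by
    rw [hw j, ← Complex.exp_nat_mul, ← Complex.orthonormalBasisOneI_repr_exp_mul_I]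
    push_cast
    ring_nf
  simp only [hw', ← map_sub, LinearIsometryEquiv.norm_map, ← map_smul, ← map_sum,
    hζ.sum_inv_norm_sq_smul_sub]

theorem ngon_is_critical (n : ℕ) (hn : 2 ≤ n)
    (w : Fin n → EuclideanSpace ℝ (Fin 2))
    (hw : ∀ k : Fin n, w k = (WithLp.equiv 2 (Fin 2 → ℝ)).symm
      ![Real.cos (2 * π * k / n), Real.sin (2 * π * k / n)]) :
    ∀ k, (((n : ℝ) - 1) / 2) • w k =
      ∑ j ∈ Finset.univ.erase k, (‖w k - w j‖ ^ 2)⁻¹ • (w k - w j) :=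
  ngon_is_critical_general n w hw
end

section
/- The configuration of two orthogonal equilateral triangles in $\mathbb{R}^4$ (six points: three forming an equilateral triangle in the plane spanned by $e_1, e_2$ and three forming an equilateral triangle in the plane spanned by $e_3, e_4$) has Gram matrix with $X_{ij} = -1/2$ within each triangle and $X_{ij} = 0$ across triangles, and satisfies the polynomial system for critical configurations of the logarithmic Fekete problem with $6$ points. -/
open Finset Matrix Real

/-- Six points in `ℝ⁴`: an equilateral triangle in the plane spanned by `e₁, e₂`,
and an equilateral triangle in the plane spanned by `e₃, e₄`. -/
noncomputable def twoTriangles : Fin 6 → EuclideanSpace ℝ (Fin 4) := fun k =>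
  if _h : (k : ℕ) < 3 then
    (WithLp.equiv 2 (Fin 4 → ℝ)).symm
      ![Real.cos (2 * π * k / 3), Real.sin (2 * π * k / 3), 0, 0]
  else
    (WithLp.equiv 2 (Fin 4 → ℝ)).symm
      ![0, 0, Real.cos (2 * π * ((k : ℕ) - 3) / 3), Real.sin (2 * π * ((k : ℕ) - 3) / 3)]

/-- The Gram matrix: `-1/2` within each triangle, `0` across triangles. -/
noncomputable def twoTrianglesGram : Matrix (Fin 6) (Fin 6) ℝ := fun i j =>
  if i = j then 1
  else if ((i : ℕ) < 3 ∧ (j : ℕ) < 3) ∨ (3 ≤ (i : ℕ) ∧ 3 ≤ (j : ℕ)) then -1/2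
  else 0

/-! Vertices of one triangle at angles `2πk/3` and `2πl/3` have inner product
`cos (2π(k - l)/3)`, which is `-1/2` unless `k = l`; vertices of different triangles lie in
orthogonal planes. The Fekete equations for the resulting Gram matrix are a finite check. -/

theorem cos_two_pi_int_div_three_of_not_dvd {m : ℤ} (hm : ¬ (3 : ℤ) ∣ m) :
    cos (2 * π * m / 3) = -1 / 2 := by
  have hperiod : cos (2 * π * m / 3) = cos (2 * π * (m % 3 : ℤ) / 3) := by
    conv_lhs => rw [← Int.emod_add_mul_ediv m 3]
    push_cast
    rw [show 2 * π * ((m % 3 : ℤ) + 3 * (m / 3 : ℤ)) / 3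
      = 2 * π * (m % 3 : ℤ) / 3 + (m / 3 : ℤ) * (2 * π) by ring]
    exact cos_periodic.int_mul _ _
  have hrem : m % 3 = 1 ∨ m % 3 = 2 := by omega
  rcases hrem with h | h <;> rw [hperiod, h] <;> push_cast
  · rw [show 2 * π * 1 / 3 = π - π / 3 by ring, cos_pi_sub, cos_pi_div_three]; ring
  · rw [show 2 * π * 2 / 3 = π / 3 + π by ring, cos_add_pi, cos_pi_div_three]; ring

theorem inner_cos_sin_zero_zero (a b : ℝ) :
    inner ℝ ((WithLp.equiv 2 (Fin 4 → ℝ)).symm ![cos a, sin a, 0, 0])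
      ((WithLp.equiv 2 (Fin 4 → ℝ)).symm ![cos b, sin b, 0, 0]) = cos (a - b) := by
  simp only [WithLp.equiv_symm_apply, PiLp.inner_apply, RCLike.inner_apply, ringHom_apply,
    Fin.sum_univ_four, Fin.isValue, cons_val_zero, cons_val_one, Matrix.cons_val, mul_zero,
    add_zero, cos_sub]
  ring

theorem inner_zero_zero_cos_sin (a b : ℝ) :
    inner ℝ ((WithLp.equiv 2 (Fin 4 → ℝ)).symm ![0, 0, cos a, sin a])
      ((WithLp.equiv 2 (Fin 4 → ℝ)).symm ![0, 0, cos b, sin b]) = cos (a - b) := by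
  simp only [WithLp.equiv_symm_apply, PiLp.inner_apply, RCLike.inner_apply, ringHom_apply,
    Fin.sum_univ_four, Fin.isValue, cons_val_zero, mul_zero, cons_val_one, add_zero,
    Matrix.cons_val, zero_add, cos_sub]
  ring

theorem inner_orthogonal_planes (x₁ x₂ y₃ y₄ : ℝ) :
    inner ℝ ((WithLp.equiv 2 (Fin 4 → ℝ)).symm ![x₁, x₂, 0, 0])
      ((WithLp.equiv 2 (Fin 4 → ℝ)).symm ![0, 0, y₃, y₄]) = 0 := by
  simp [PiLp.inner_apply, Fin.sum_univ_four]

theorem inner_twoTriangles_of_same_triangle {i j : Fin 6}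
    (h : ((i : ℕ) < 3 ∧ (j : ℕ) < 3) ∨ (3 ≤ (i : ℕ) ∧ 3 ≤ (j : ℕ))) :
    inner ℝ (twoTriangles i) (twoTriangles j) = cos (2 * π * (((i : ℤ) - j : ℤ) : ℝ) / 3) := by
  rcases h with ⟨hi, hj⟩ | ⟨hi, hj⟩
  · simp only [twoTriangles, dif_pos hi, dif_pos hj, inner_cos_sin_zero_zero]
    congr 1; push_cast; ring
  · simp only [twoTriangles, dif_neg (not_lt.2 hi), dif_neg (not_lt.2 hj),
      inner_zero_zero_cos_sin]
    congr 1; push_cast; ring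

theorem inner_twoTriangles_of_not_same_triangle {i j : Fin 6}
    (h : ¬(((i : ℕ) < 3 ∧ (j : ℕ) < 3) ∨ (3 ≤ (i : ℕ) ∧ 3 ≤ (j : ℕ)))) :
    inner ℝ (twoTriangles i) (twoTriangles j) = 0 := by
  rcases lt_or_ge (i : ℕ) 3 with hi | hi
  · have hj : ¬(j : ℕ) < 3 := by omega
    simp only [twoTriangles, dif_pos hi, dif_neg hj, inner_orthogonal_planes]
  · have hj : (j : ℕ) < 3 := by omega
    simp only [twoTriangles, dif_neg (not_lt.2 hi), dif_pos hj]
    rw [real_inner_comm, inner_orthogonal_planes]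

theorem inner_twoTriangles (i j : Fin 6) :
    inner ℝ (twoTriangles i) (twoTriangles j) = twoTrianglesGram i j := by
  unfold twoTrianglesGram
  split_ifs with hij hsame
  · subst hij
    rw [inner_twoTriangles_of_same_triangle (by omega), sub_self, Int.cast_zero, mul_zero,
      zero_div, cos_zero]
  · rw [inner_twoTriangles_of_same_triangle hsame]
    exact cos_two_pi_int_div_three_of_not_dvd (by omega)
  · exact inner_twoTriangles_of_not_same_triangle hsame

theorem twoTrianglesGram_isSymm : twoTrianglesGram.IsSymm :=
  IsSymm.ext fun i j => by rw [← inner_twoTriangles, ← inner_twoTriangles, real_inner_comm]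

theorem twoTrianglesGram_ne_one {i j : Fin 6} (h : i ≠ j) : twoTrianglesGram i j ≠ 1 := by
  rw [twoTrianglesGram, if_neg h]
  split_ifs <;> norm_num

theorem twoTrianglesGram_row_sum (j : Fin 6) :
    1 + ∑ k ∈ univ.erase j, twoTrianglesGram j k = 0 := by
  rw [sum_erase_eq_sub (mem_univ j)]
  fin_cases j <;> norm_num +decide [twoTrianglesGram, Fin.sum_univ_six]

theorem twoTrianglesGram_balance (i k : Fin 6) :
    ∑ j ∈ univ.erase k, (twoTrianglesGram i k - twoTrianglesGram i j) /
      (1 - twoTrianglesGram k j) = 5 * twoTrianglesGram i k := by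
  rw [sum_erase_eq_sub (mem_univ k)]
  fin_cases i <;> fin_cases k <;>
    norm_num +decide [twoTrianglesGram, Fin.sum_univ_six]

theorem two_triangles_is_critical :
    (∀ i j, (inner ℝ (twoTriangles i) (twoTriangles j) : ℝ) = twoTrianglesGram i j) ∧
    FeketeSystem 6 twoTrianglesGram :=
  ⟨inner_twoTriangles, twoTrianglesGram_isSymm, fun _ => if_pos rfl,
    fun _ _ => twoTrianglesGram_ne_one, twoTrianglesGram_row_sum,
    fun i k _ => by norm_num [twoTrianglesGram_balance i k]⟩
end
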